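/- Let w : ℝ² → ℝ be differentiable and satisfy the gas dynamics equation w_x = w·w_y at every point of ℝ², and let t ∈ ℝ. Suppose 1 − t·w(x − t·y, y) ≠ 0 for all (x,y) in an open set V ⊆ ℝ². Define ŵ on V by ŵ(x,y) = w(x − t·y, y) / (1 − t·w(x − t·y, y)). Then ŵ satisfies ŵ_x = ŵ·ŵ_y at every point of V. (This is the finite point symmetry of the gas dynamics equation generated by the vector field y∂_x + w²∂_w from the projective symmetry algebra sl(3).) -/

import Mathlib

/-!
Write `ŵ = m ∘ u` with `u(x, y) = w(x - t y, y)` and the Möbius map `m(s) = s / (1 - t s)`,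
whose derivative is `1 / (1 - t s)²`. With `d = 1 - t w` (evaluated at the sheared point),
the chain rule gives `ŵ_x = w_x / d²` and `ŵ_y = (w_y - t w_x) / d²`. Substituting
`w_x = w w_y` turns the latter into `w_y / d`, so `ŵ ŵ_y = w w_y / d² = ŵ_x`.
-/

noncomputable def pdx (w : ℝ × ℝ → ℝ) (p : ℝ × ℝ) : ℝ := fderiv ℝ w p (1, 0)

noncomputable def pdy (w : ℝ × ℝ → ℝ) (p : ℝ × ℝ) : ℝ := fderiv ℝ w p (0, 1)

section Chain

variable {g : ℝ → ℝ} {g' : ℝ} {u : ℝ × ℝ → ℝ} {p : ℝ × ℝ}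

theorem fderiv_comp_apply_of_hasDerivAt (hg : HasDerivAt g g' (u p))
    (hu : DifferentiableAt ℝ u p) (v : ℝ × ℝ) :
    fderiv ℝ (fun q => g (u q)) p v = g' * fderiv ℝ u p v := by
  simp [show fderiv ℝ (fun q => g (u q)) p = _ from
    (hg.comp_hasFDerivAt p hu.hasFDerivAt).fderiv]

theorem pdx_comp_of_hasDerivAt (hg : HasDerivAt g g' (u p)) (hu : DifferentiableAt ℝ u p) :
    pdx (fun q => g (u q)) p = g' * pdx u p :=
  fderiv_comp_apply_of_hasDerivAt hg hu _

theorem pdy_comp_of_hasDerivAt (hg : HasDerivAt g g' (u p)) (hu : DifferentiableAt ℝ u p) :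
    pdy (fun q => g (u q)) p = g' * pdy u p :=
  fderiv_comp_apply_of_hasDerivAt hg hu _

end Chain

section Shear

variable {w : ℝ × ℝ → ℝ} {t : ℝ} {p : ℝ × ℝ}

theorem fderiv_comp_shear_apply (hw : DifferentiableAt ℝ w (p.1 - t * p.2, p.2))
    (v : ℝ × ℝ) :
    fderiv ℝ (fun q : ℝ × ℝ => w (q.1 - t * q.2, q.2)) p v =
      fderiv ℝ w (p.1 - t * p.2, p.2) (v.1 - t * v.2, v.2) := by
  have hshear : HasFDerivAt (fun q : ℝ × ℝ => (q.1 - t * q.2, q.2))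
      ((ContinuousLinearMap.fst ℝ ℝ ℝ - t • ContinuousLinearMap.snd ℝ ℝ ℝ).prod
        (ContinuousLinearMap.snd ℝ ℝ ℝ)) p :=
    (hasFDerivAt_fst.sub (hasFDerivAt_snd.const_mul t)).prodMk hasFDerivAt_snd
  simp [show fderiv ℝ (fun q : ℝ × ℝ => w (q.1 - t * q.2, q.2)) p = _ from
    (hw.hasFDerivAt.comp p hshear).fderiv]

theorem pdx_comp_shear (hw : DifferentiableAt ℝ w (p.1 - t * p.2, p.2)) :
    pdx (fun q : ℝ × ℝ => w (q.1 - t * q.2, q.2)) p = pdx w (p.1 - t * p.2, p.2) := by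
  simp [pdx, fderiv_comp_shear_apply hw]

theorem pdy_comp_shear (hw : DifferentiableAt ℝ w (p.1 - t * p.2, p.2)) :
    pdy (fun q : ℝ × ℝ => w (q.1 - t * q.2, q.2)) p =
      pdy w (p.1 - t * p.2, p.2) - t * pdx w (p.1 - t * p.2, p.2) := by
  have hv : ((0 : ℝ) - t * 1, (1 : ℝ)) = ((0 : ℝ), (1 : ℝ)) - t • ((1 : ℝ), (0 : ℝ)) := by
    simp
  rw [pdy, fderiv_comp_shear_apply hw, hv, map_sub, map_smul, smul_eq_mul, ← pdx, ← pdy]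

end Shear

theorem hasDerivAt_div_one_sub_mul {t s : ℝ} (h : 1 - t * s ≠ 0) :
    HasDerivAt (fun s => s / (1 - t * s)) ((1 - t * s) ^ 2)⁻¹ s := by
  refine ((hasDerivAt_id' s).fun_div
    (((hasDerivAt_id' s).const_mul t).const_sub 1) h).congr_deriv ?_
  field_simp
  ring

theorem gas_dynamics_symmetry_projective_general (w : ℝ × ℝ → ℝ)
    (hw : Differentiable ℝ w)
    (heq : ∀ p : ℝ × ℝ, pdx w p = w p * pdy w p)
    (t : ℝ) (V : Set (ℝ × ℝ))
    (hden : ∀ p ∈ V, 1 - t * w (p.1 - t * p.2, p.2) ≠ 0) :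
    ∀ p ∈ V,
      pdx (fun q : ℝ × ℝ =>
          w (q.1 - t * q.2, q.2) / (1 - t * w (q.1 - t * q.2, q.2))) p
        = (w (p.1 - t * p.2, p.2) / (1 - t * w (p.1 - t * p.2, p.2))) *
          pdy (fun q : ℝ × ℝ =>
          w (q.1 - t * q.2, q.2) / (1 - t * w (q.1 - t * q.2, q.2))) p := by
  intro p hp
  set u : ℝ × ℝ → ℝ := fun q => w (q.1 - t * q.2, q.2) with hu_def
  have hu : DifferentiableAt ℝ u p := (hw _).comp p (by fun_prop)
  have hd := hden p hp
  have hm := hasDerivAt_div_one_sub_mul hd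
  rw [pdx_comp_of_hasDerivAt (u := u) hm hu, pdy_comp_of_hasDerivAt (u := u) hm hu,
    hu_def, pdx_comp_shear (hw _), pdy_comp_shear (hw _), heq]
  field_simp

/-- if `w` is differentiable on `ℝ²` and satisfies `w_x = w·w_y`
everywhere, `t ∈ ℝ`, and `1 − t·w(x − t·y, y) ≠ 0` on an open set `V`, then
`ŵ(x,y) = w(x − t·y, y)/(1 − t·w(x − t·y, y))` satisfies `ŵ_x = ŵ·ŵ_y` at every
point of `V` (the finite point symmetry generated by `y∂_x + w²∂_w` from
`sl(3)`). -/
theorem gas_dynamics_symmetry_projective (w : ℝ × ℝ → ℝ)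
    (hw : Differentiable ℝ w)
    (heq : ∀ p : ℝ × ℝ, pdx w p = w p * pdy w p)
    (t : ℝ) (V : Set (ℝ × ℝ)) (hV : IsOpen V)
    (hden : ∀ p ∈ V, 1 - t * w (p.1 - t * p.2, p.2) ≠ 0) :
    ∀ p ∈ V,
      pdx (fun q : ℝ × ℝ =>
          w (q.1 - t * q.2, q.2) / (1 - t * w (q.1 - t * q.2, q.2))) p
        = (w (p.1 - t * p.2, p.2) / (1 - t * w (p.1 - t * p.2, p.2))) *
          pdy (fun q : ℝ × ℝ =>
          w (q.1 - t * q.2, q.2) / (1 - t * w (q.1 - t * q.2, q.2))) p :=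
  gas_dynamics_symmetry_projective_general w hw heq t V hden
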